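/- arXiv:1905.12113 — 5 statements merged into one kernel-verified Lean document; each statement's English description precedes it below -/
import Mathlib

section
/- Let $S=k[x_0,x_1]$ be the polynomial ring in two variables over a field $k$, graded by total degree, and let $n\ge 1$. Consider the graded $S$-module map $\operatorname{can}: S_n\otimes_k S(-n)\to S$ sending the generator corresponding to a degree-$n$ monomial $m$ to $m$. Then the kernel of $\operatorname{can}$ is generated as an $S$-module by the degree $n+1$ elements $u_i\otimes x_0 - u_{i+1}\otimes x_1$ for $0\le i<n$, where $u_i$ denotes the basis element $x_0^i x_1^{n-i}$ of $S_n$. -/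
/-!
If `f ∈ ker can` vanishes below index `t < n`, then `f_t x₀^t x₁^(n-t)` is, up to sign, a sum of
multiples of `x₀^(t+1)`; as `x₀` is prime and does not divide `x₁`, `x₀ ∣ f_t`, and subtracting
`(f_t / x₀) • (u_t ⊗ x₀ - u_{t+1} ⊗ x₁)` makes `f` vanish at `t` as well. Sweeping `t` up to `n`
leaves a kernel element supported at `n`, and `f_n x₀^n = 0` forces it to be zero.
-/

open MvPolynomial

noncomputable section

def canMap (k : Type*) [Field k] (n : ℕ) :
    (Fin (n + 1) → MvPolynomial (Fin 2) k) →ₗ[MvPolynomial (Fin 2) k]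
      MvPolynomial (Fin 2) k where
  toFun f := ∑ i : Fin (n + 1), f i * (X 0 : MvPolynomial (Fin 2) k) ^ (i : ℕ) * X 1 ^ (n - (i : ℕ))
  map_add' f g := by
    simp [add_mul, Finset.sum_add_distrib]
  map_smul' c f := by
    simp [Finset.mul_sum, smul_eq_mul, mul_assoc]

theorem Fin.sum_ite_val_eq {M : Type*} [AddCommMonoid M] {m c : ℕ} (hc : c < m) (F : Fin m → M) :
    (∑ j : Fin m, if (j : ℕ) = c then F j else 0) = F ⟨c, hc⟩ := by
  simp_rw [← Fin.ext_iff (b := ⟨c, hc⟩)]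
  simp

theorem Prime.dvd_of_dvd_mul_pow_of_not_dvd {M : Type*} [CommMonoidWithZero M] {p a b : M}
    (hp : Prime p) (hb : ¬ p ∣ b) {m : ℕ} (h : p ∣ a * b ^ m) : p ∣ a :=
  (hp.dvd_mul.mp h).resolve_right fun h' => hb (hp.dvd_of_dvd_pow h')

namespace canMap

variable {k : Type*} [Field k] {n : ℕ}

/-- `u_i ⊗ x₀ - u_{i+1} ⊗ x₁`. -/
def relation (i : Fin n) : Fin (n + 1) → MvPolynomial (Fin 2) k :=
  fun j : Fin (n + 1) =>
    (if (j : ℕ) = (i : ℕ) then (X 0 : MvPolynomial (Fin 2) k) else 0) -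
    (if (j : ℕ) = (i : ℕ) + 1 then (X 1 : MvPolynomial (Fin 2) k) else 0)

variable (k n) in
def relations : Submodule (MvPolynomial (Fin 2) k) (Fin (n + 1) → MvPolynomial (Fin 2) k) :=
  Submodule.span _ {v | ∃ i : Fin n, v = relation i}

theorem relation_mem_relations (i : Fin n) : relation i ∈ relations k n :=
  Submodule.subset_span ⟨i, rfl⟩

theorem apply (f : Fin (n + 1) → MvPolynomial (Fin 2) k) :
    canMap k n f = ∑ i : Fin (n + 1), f i * X 0 ^ (i : ℕ) * X 1 ^ (n - (i : ℕ)) := rfl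

theorem apply_relation (i : Fin n) : canMap k n (relation i) = 0 := by
  simp only [apply, relation, sub_mul, ite_mul, zero_mul, Finset.sum_sub_distrib]
  rw [Fin.sum_ite_val_eq (by omega), Fin.sum_ite_val_eq (by omega),
    show n - (i : ℕ) = n - ((i : ℕ) + 1) + 1 by omega]
  ring

theorem relations_le_ker : relations k n ≤ LinearMap.ker (canMap k n) :=
  Submodule.span_le.mpr fun _ ⟨i, hi⟩ => hi ▸ apply_relation i

theorem X_zero_dvd_of_apply_eq_zero {f : Fin (n + 1) → MvPolynomial (Fin 2) k}
    (hf : canMap k n f = 0) {t : ℕ} (ht : t < n) (hz : ∀ j : Fin (n + 1), (j : ℕ) < t → f j = 0) :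
    X 0 ∣ f ⟨t, by omega⟩ := by
  set t' : Fin (n + 1) := ⟨t, by omega⟩
  have hrest : X 0 ^ (t + 1) ∣
      ∑ j ∈ Finset.univ.erase t', f j * X 0 ^ (j : ℕ) * X 1 ^ (n - (j : ℕ)) := by
    refine Finset.dvd_sum fun j hj => ?_
    rcases lt_or_gt_of_ne (Fin.val_ne_of_ne (Finset.ne_of_mem_erase hj)) with h | h
    · simp [hz j h]
    · exact ((pow_dvd_pow _ h).mul_left _).mul_right _
  rw [apply, ← Finset.add_sum_erase _ _ (Finset.mem_univ t')] at hf
  have hlead : X 0 ^ t * X 0 ∣ X 0 ^ t * (f t' * X 1 ^ (n - t)) := by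
    rw [← pow_succ, mul_left_comm, ← mul_assoc]
    exact (dvd_add_left hrest).mp (hf ▸ dvd_zero _)
  exact (X_prime (R := k)).dvd_of_dvd_mul_pow_of_not_dvd (by simp [X_dvd_X])
    ((mul_dvd_mul_iff_left (pow_ne_zero t (X_ne_zero 0))).mp hlead)

theorem eq_zero_of_apply_eq_zero {f : Fin (n + 1) → MvPolynomial (Fin 2) k}
    (hf : canMap k n f = 0) (hz : ∀ j : Fin (n + 1), (j : ℕ) < n → f j = 0) : f = 0 := by
  have hlast : f (Fin.last n) = 0 := by
    rw [apply, Finset.sum_eq_single (Fin.last n) (fun j _ hj => by simp [hz j (Fin.val_lt_last hj)])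
      (by simp)] at hf
    simpa [X_ne_zero] using hf
  funext j
  rcases Fin.eq_castSucc_or_eq_last j with ⟨j, rfl⟩ | rfl
  · exact hz _ j.isLt
  · exact hlast

theorem mem_relations_of_apply_eq_zero_of_vanish_below {t : ℕ} (ht : t ≤ n)
    {f : Fin (n + 1) → MvPolynomial (Fin 2) k} (hf : canMap k n f = 0)
    (hz : ∀ j : Fin (n + 1), (j : ℕ) < t → f j = 0) : f ∈ relations k n := by
  induction ht using Nat.decreasingInduction generalizing f with
  | self => rw [eq_zero_of_apply_eq_zero hf hz]; exact zero_mem _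
  | of_succ t ht ih =>
    obtain ⟨q, hq⟩ := X_zero_dvd_of_apply_eq_zero hf ht hz
    have hsub : f - q • relation ⟨t, ht⟩ ∈ relations k n := by
      refine ih (by simp [hf, apply_relation]) fun j hj => ?_
      rcases Nat.lt_succ_iff_lt_or_eq.mp hj with hj | hj
      · simp [relation, hz j hj, hj.ne, (hj.trans t.lt_succ_self).ne]
      · rw [show j = ⟨t, by omega⟩ from Fin.ext hj]
        simp [relation, hq, mul_comm]
    simpa using add_mem hsub (Submodule.smul_mem _ q (relation_mem_relations ⟨t, ht⟩))

end canMap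

theorem kernel_of_can_generated_general (k : Type*) [Field k] (n : ℕ) :
    LinearMap.ker (canMap k n) =
      Submodule.span (MvPolynomial (Fin 2) k)
        {v : Fin (n + 1) → MvPolynomial (Fin 2) k | ∃ i : Fin n,
          v = fun j : Fin (n + 1) =>
            (if (j : ℕ) = (i : ℕ) then (X 0 : MvPolynomial (Fin 2) k) else 0) -
            (if (j : ℕ) = (i : ℕ) + 1 then (X 1 : MvPolynomial (Fin 2) k) else 0)} :=
  le_antisymm
    (fun _ hf => canMap.mem_relations_of_apply_eq_zero_of_vanish_below (Nat.zero_le n) hf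
      fun _ h => absurd h (Nat.not_lt_zero _))
    canMap.relations_le_ker

/-- the kernel of `can : S_n ⊗ S(-n) → S` is generated as an `S`-module by the
elements `u_i ⊗ x₀ - u_{i+1} ⊗ x₁` for `0 ≤ i < n`. -/
theorem kernel_of_can_generated (k : Type*) [Field k] (n : ℕ) (hn : 1 ≤ n) :
    LinearMap.ker (canMap k n) =
      Submodule.span (MvPolynomial (Fin 2) k)
        {v : Fin (n + 1) → MvPolynomial (Fin 2) k | ∃ i : Fin n,
          v = fun j : Fin (n + 1) =>
            (if (j : ℕ) = (i : ℕ) then (X 0 : MvPolynomial (Fin 2) k) else 0) -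
            (if (j : ℕ) = (i : ℕ) + 1 then (X 1 : MvPolynomial (Fin 2) k) else 0)} :=
  kernel_of_can_generated_general k n
end
end

section
/- Let $k$ be a field, $S=k[x_0,x_1]$, and for $e\ge 1$, $m\ge 0$ consider the map $\alpha_e: S_e\otimes S_2(S_m)\to S_{m+e}\otimes S_m$ induced by the inclusion of symmetric tensors $S_2(S_m)\subset S_m\otimes S_m$ followed by multiplication $S_e\otimes S_m\to S_{m+e}$ on the first factor. Then $\alpha_e$ is surjective for all $e\ge 1$ and $m\ge 0$. -/
open MvPolynomial TensorProduct

noncomputable section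

variable (k : Type*) [Field k]

/-- degree-`d` binary forms, as a subspace of `S = k[x₀,x₁]`. -/
abbrev binForms (d : ℕ) : Submodule k (MvPolynomial (Fin 2) k) :=
  MvPolynomial.homogeneousSubmodule (Fin 2) k d

/-- the flip on `S ⊗ S`. -/
def flipMap : MvPolynomial (Fin 2) k ⊗[k] MvPolynomial (Fin 2) k →ₗ[k]
    MvPolynomial (Fin 2) k ⊗[k] MvPolynomial (Fin 2) k :=
  (TensorProduct.comm k _ _).toLinearMap

/-- the subspace `S_2(S_m)` of `S ⊗ S`: tensors in `S_m ⊗ S_m`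
which are symmetric (fixed by the flip). -/
def symTensors (m : ℕ) : Submodule k (MvPolynomial (Fin 2) k ⊗[k] MvPolynomial (Fin 2) k) :=
  (Submodule.map₂ (TensorProduct.mk k _ _) (binForms k m) (binForms k m)) ⊓
    LinearMap.ker (flipMap k - LinearMap.id)


/-!
The target is spanned by the monomial tensors `[a, b] = x₀^a x₁^(m+e-a) ⊗ x₀^b x₁^(m-b)`.
Multiplying the symmetric tensors `[b, b]` and `[b, c] + [c, b]` of `S_m ⊗ S_m` by
`x₀^d x₁^(e-d)`, `d ≤ e`, shows that the image of `α_e` contains `[b + d, b]` and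
`[b + d, c] + [c + d, b]`. The first settles `b ≤ a ≤ b + e`; the second with `d = 0` swaps the
factors, and with `d = e` it trades `[a, b]` for `[b + e, a - e]`, which is strictly closer to the
diagonal once `a > b + e` because `e ≥ 1`.
-/

section BinaryMonomials

variable (R : Type*) [CommSemiring R]

/-- Of degree `n` only when `i ≤ n`, since the subtraction truncates. -/
def binMonomial (n i : ℕ) : MvPolynomial (Fin 2) R := X 0 ^ i * X 1 ^ (n - i)

variable {R}

theorem binMonomial_mem_homogeneousSubmodule {n i : ℕ} (hi : i ≤ n) :
    binMonomial R n i ∈ homogeneousSubmodule (Fin 2) R n := by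
  have := ((isHomogeneous_X R (0 : Fin 2)).pow i).mul ((isHomogeneous_X R (1 : Fin 2)).pow (n - i))
  rwa [one_mul, one_mul, Nat.add_sub_cancel' hi] at this

theorem binMonomial_mul_binMonomial {n p i j : ℕ} (hi : i ≤ n) (hj : j ≤ p) :
    binMonomial R n i * binMonomial R p j = binMonomial R (n + p) (i + j) := by
  rw [binMonomial, binMonomial, binMonomial, show n + p - (i + j) = (n - i) + (p - j) by omega]
  ring

theorem homogeneousSubmodule_eq_span_binMonomial (n : ℕ) :
    homogeneousSubmodule (Fin 2) R n = Submodule.span R (binMonomial R n '' Set.Iic n) := by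
  apply le_antisymm
  · rw [homogeneousSubmodule_eq_finsupp_supported, AddMonoidAlgebra.supported_eq_span_single,
      Submodule.span_le]
    rintro _ ⟨s, hs, rfl⟩
    have hdeg : s 0 + s 1 = n := by simpa [Finsupp.degree_eq_sum, Fin.sum_univ_two] using hs
    refine Submodule.subset_span ⟨s 0, Set.mem_Iic.2 (by omega), ?_⟩
    change _ = monomial s (1 : R)
    rw [binMonomial, monomial_eq, Finsupp.prod_pow, Fin.prod_univ_two, C_1,
      one_mul, ← hdeg, Nat.add_sub_cancel_left]
  · rw [Submodule.span_le]
    rintro _ ⟨i, hi, rfl⟩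
    exact binMonomial_mem_homogeneousSubmodule hi

end BinaryMonomials

theorem map_rTensor_mulLeft_map₂_le {σ R : Type*} [CommSemiring R] {e : ℕ}
    {g : MvPolynomial σ R} (hg : g ∈ homogeneousSubmodule σ R e) (m n : ℕ) :
    (Submodule.map₂ (TensorProduct.mk R _ _) (homogeneousSubmodule σ R m)
        (homogeneousSubmodule σ R n)).map (LinearMap.rTensor _ (LinearMap.mulLeft R g)) ≤
      Submodule.map₂ (TensorProduct.mk R _ _) (homogeneousSubmodule σ R (m + e))
        (homogeneousSubmodule σ R n) := by
  rw [Submodule.map_map₂, Submodule.map₂_le]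
  intro a ha b hb
  rw [add_comm]
  exact Submodule.apply_mem_map₂ _
    (homogeneousSubmodule_mul e m (Submodule.mul_mem_mul hg ha)) hb

def alphaImage (e m : ℕ) : Submodule k (MvPolynomial (Fin 2) k ⊗[k] MvPolynomial (Fin 2) k) :=
  Submodule.span k
    {z : MvPolynomial (Fin 2) k ⊗[k] MvPolynomial (Fin 2) k |
      ∃ g ∈ binForms k e, ∃ t ∈ symTensors k m,
        z = LinearMap.rTensor _ (LinearMap.mulLeft k g) t}

section alphaImage

variable {k} {e m : ℕ}

theorem tmul_self_mem_symTensors {p : MvPolynomial (Fin 2) k} (hp : p ∈ binForms k m) :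
    p ⊗ₜ[k] p ∈ symTensors k m :=
  ⟨Submodule.apply_mem_map₂ _ hp hp, by simp [flipMap]⟩

theorem tmul_add_tmul_comm_mem_symTensors {p q : MvPolynomial (Fin 2) k}
    (hp : p ∈ binForms k m) (hq : q ∈ binForms k m) :
    p ⊗ₜ[k] q + q ⊗ₜ[k] p ∈ symTensors k m :=
  ⟨add_mem (Submodule.apply_mem_map₂ _ hp hq) (Submodule.apply_mem_map₂ _ hq hp),
    by simp [flipMap, add_comm]⟩

theorem rTensor_mulLeft_mem_alphaImage {g : MvPolynomial (Fin 2) k} (hg : g ∈ binForms k e)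
    {t : MvPolynomial (Fin 2) k ⊗[k] MvPolynomial (Fin 2) k} (ht : t ∈ symTensors k m) :
    LinearMap.rTensor _ (LinearMap.mulLeft k g) t ∈ alphaImage k e m :=
  Submodule.subset_span ⟨g, hg, t, ht, rfl⟩

theorem alphaImage_le_map₂ :
    alphaImage k e m ≤
      Submodule.map₂ (TensorProduct.mk k _ _) (binForms k (m + e)) (binForms k m) := by
  rw [alphaImage, Submodule.span_le]
  rintro _ ⟨g, hg, t, ht, rfl⟩
  exact map_rTensor_mulLeft_map₂_le hg m m (Submodule.mem_map_of_mem ht.1)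

theorem binMonomial_tmul_self_mem_alphaImage {b d : ℕ} (hb : b ≤ m) (hd : d ≤ e) :
    binMonomial k (m + e) (b + d) ⊗ₜ[k] binMonomial k m b ∈ alphaImage k e m := by
  have := rTensor_mulLeft_mem_alphaImage (binMonomial_mem_homogeneousSubmodule (R := k) hd)
    (tmul_self_mem_symTensors (binMonomial_mem_homogeneousSubmodule hb))
  rwa [LinearMap.rTensor_tmul, LinearMap.mulLeft_apply, binMonomial_mul_binMonomial hd hb,
    add_comm e, add_comm d] at this

theorem binMonomial_tmul_add_tmul_mem_alphaImage {b c d : ℕ} (hb : b ≤ m) (hc : c ≤ m)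
    (hd : d ≤ e) :
    binMonomial k (m + e) (b + d) ⊗ₜ[k] binMonomial k m c +
      binMonomial k (m + e) (c + d) ⊗ₜ[k] binMonomial k m b ∈ alphaImage k e m := by
  have := rTensor_mulLeft_mem_alphaImage (binMonomial_mem_homogeneousSubmodule (R := k) hd)
    (tmul_add_tmul_comm_mem_symTensors (binMonomial_mem_homogeneousSubmodule hb)
      (binMonomial_mem_homogeneousSubmodule hc))
  rwa [map_add, LinearMap.rTensor_tmul, LinearMap.rTensor_tmul, LinearMap.mulLeft_apply,
    LinearMap.mulLeft_apply, binMonomial_mul_binMonomial hd hb, binMonomial_mul_binMonomial hd hc,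
    add_comm e, add_comm d, add_comm d] at this

theorem binMonomial_tmul_binMonomial_mem_alphaImage (he : 1 ≤ e) {a b : ℕ} (ha : a ≤ m + e)
    (hb : b ≤ m) :
    binMonomial k (m + e) a ⊗ₜ[k] binMonomial k m b ∈ alphaImage k e m := by
  by_cases hab : b ≤ a
  · by_cases hnear : a ≤ b + e
    · simpa [Nat.add_sub_cancel' hab] using
        binMonomial_tmul_self_mem_alphaImage (k := k) hb (show a - b ≤ e by omega)
    · have hrel := binMonomial_tmul_add_tmul_mem_alphaImage (k := k) hb
        (show a - e ≤ m by omega) (le_refl e)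
      have hcloser := binMonomial_tmul_binMonomial_mem_alphaImage he
        (show b + e ≤ m + e by omega) (show a - e ≤ m by omega)
      rw [Nat.sub_add_cancel (by omega : e ≤ a)] at hrel
      simpa using sub_mem hrel hcloser
  · have hrel := binMonomial_tmul_add_tmul_mem_alphaImage (k := k) (show a ≤ m by omega) hb
      (Nat.zero_le e)
    have hswap := binMonomial_tmul_binMonomial_mem_alphaImage he
      (show b ≤ m + e by omega) (show a ≤ m by omega)
    simpa using sub_mem hrel hswap
-- a swap keeps the distance `|a - b|` and makes `b ≤ a`
termination_by (a - b + (b - a), b - a)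
decreasing_by all_goals (rw [Prod.lex_def]; omega)

end alphaImage

/-- the map `α_e : S_e ⊗ S_2(S_m) → S_{m+e} ⊗ S_m`,
`g ⊗ t ↦ (multiplication by g on the first factor applied to t)`, is surjective
for all `e ≥ 1`, `m ≥ 0`; i.e. the span of the images of all `g ⊗ t` with
`g ∈ S_e` and `t` a symmetric tensor in `S_m ⊗ S_m` is all of `S_{m+e} ⊗ S_m`. -/
theorem alpha_e_surjective (e m : ℕ) (he : 1 ≤ e) :
    Submodule.span k
        {z : MvPolynomial (Fin 2) k ⊗[k] MvPolynomial (Fin 2) k |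
          ∃ g ∈ binForms k e, ∃ t ∈ symTensors k m,
            z = LinearMap.rTensor _ (LinearMap.mulLeft k g) t} =
      Submodule.map₂ (TensorProduct.mk k _ _) (binForms k (m + e)) (binForms k m) := by
  refine le_antisymm alphaImage_le_map₂ ?_
  rw [binForms, binForms, homogeneousSubmodule_eq_span_binMonomial,
    homogeneousSubmodule_eq_span_binMonomial, Submodule.map₂_span_span, Submodule.span_le]
  rintro _ ⟨_, ⟨a, ha, rfl⟩, _, ⟨b, hb, rfl⟩, rfl⟩
  exact binMonomial_tmul_binMonomial_mem_alphaImage he ha hb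
end
end

section
/- Let $k$ be a field and let $x_1,\dots,x_m$ be variables. For the $m\times \binom{m+1}{2}$ matrix $\Phi(x)$ of linear forms representing the canonical map $S^2(W^*)\to W^*\otimes W^*$ evaluated at $x=(x_1,\dots,x_m)$ (i.e., the column indexed by $x_i x_j$ with $i\ne j$ is $x_i e_j + x_j e_i$, and the column indexed by $x_i^2$ is $x_i e_i$), every monomial of degree $m$ in $x_1,\dots,x_m$ occurs, up to sign, as a maximal ($m\times m$) minor of $\Phi(x)$. Consequently, the ideal of maximal minors of $\Phi(x)$ in $k[x_1,\dots,x_m]$ equals $(x_1,\dots,x_m)^m$. -/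
open MvPolynomial Pointwise

noncomputable section

/-!
Write a degree-`m` monomial as `∏ l, X (j l)` with `j : Fin m → Fin m` monotone (sort the
variables) and take as column `l` the one indexed by `x_l x_{j l}`. The resulting `m × m` minor
has `X (j l)` on the diagonal and its only other nonzero entry of column `l` in row `j l`.
A permutation picking only such entries maps each `l` to `l` or `j l`, and monotonicity of `j`
forces it to be the identity, so the minor is exactly `∏ l, X (j l)`. Conversely every entry of
`Φ(x)` is linear, so every maximal minor lies in `(x₁,…,x_m)^m`.
-/

/-- The matrix `Φ(x)` of linear forms representing the canonical map
`S²(W*) → W* ⊗ W*`: rows indexed by `Fin m`, columns by unordered pairs `{i,j}`;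
the column indexed by `xᵢxⱼ` (`i ≠ j`) is `xᵢ eⱼ + xⱼ eᵢ` and the column indexed
by `xᵢ²` is `xᵢ eᵢ`. -/
def Phi (k : Type*) [Field k] (m : ℕ) :
    Matrix (Fin m) {p : Fin m × Fin m // p.1 ≤ p.2} (MvPolynomial (Fin m) k) :=
  fun l c =>
    if c.1.1 = c.1.2 then (if l = c.1.1 then X c.1.1 else 0)
    else (if l = c.1.2 then X c.1.1 else 0) + (if l = c.1.1 then X c.1.2 else 0)

theorem Equiv.Perm.eq_one_of_forall_apply_eq_self_or_monotone {α : Type*} [LinearOrder α]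
    [WellFoundedLT α] {j : α → α} (hj : Monotone j) {σ : Equiv.Perm α}
    (hσ : ∀ l, σ l = l ∨ σ l = j l) : σ = 1 := by
  ext l
  induction l using WellFoundedLT.induction with
  | _ l ih =>
  simp only [Equiv.Perm.coe_one, id] at ih ⊢
  by_contra hl
  have hlt : l < σ l := lt_of_not_ge fun hle => hl (σ.injective (ih _ (lt_of_le_of_ne hle hl)))
  obtain ⟨l', hl'⟩ : ∃ l', σ l' = l := σ.surjective l
  have hll' : l < l' := by
    refine lt_of_le_of_ne (le_of_not_gt fun h => hl ?_) fun h => hl (h ▸ hl')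
    obtain rfl : l' = l := (ih l' h).symm.trans hl'
    exact hl'
  have hjl' : j l' = l := ((hσ l').resolve_left (hl' ▸ hll'.ne)).symm.trans hl'
  have := hj hll'.le
  rw [hjl', ← (hσ l).resolve_left hl] at this
  exact this.not_gt hlt

theorem Matrix.det_of_monotone_offDiag {R n : Type*} [CommRing R] [Fintype n] [LinearOrder n]
    {j : n → n} (hj : Monotone j) (d e : n → R) :
    (Matrix.of fun r l => if r = l then d l else if r = j l then e l else 0).det = ∏ l, d l := by
  rw [Matrix.det_apply', Finset.sum_eq_single 1]
  · simp
  · intro σ _ hσ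
    obtain ⟨l, hl⟩ : ∃ l, ¬ (σ l = l ∨ σ l = j l) := by
      by_contra! h
      exact hσ (Equiv.Perm.eq_one_of_forall_apply_eq_self_or_monotone hj h)
    push Not at hl
    rw [Finset.prod_eq_zero (Finset.mem_univ l) (by simp [hl.1, hl.2]), mul_zero]
  · simp

theorem Matrix.det_mem_pow_card {R n : Type*} [CommRing R] [Fintype n] [DecidableEq n]
    {I : Ideal R} {A : Matrix n n R} (hA : ∀ i j, A i j ∈ I) : A.det ∈ I ^ Fintype.card n := by
  rw [Matrix.det_apply', ← Finset.card_univ, ← Finset.prod_const]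
  exact Ideal.sum_mem _ fun σ _ =>
    Ideal.mul_mem_left _ _ (Ideal.prod_mem_prod fun i _ => hA _ _)

theorem Fintype.exists_prod_comp_eq_prod_pow {ι M : Type*} [Fintype ι] [CommMonoid M]
    {d : ι → ℕ} {n : ℕ} (hd : ∑ i, d i = n) :
    ∃ g : Fin n → ι, ∀ f : ι → M, ∏ l, f (g l) = ∏ i, f i ^ d i := by
  let e : (Σ i, Fin (d i)) ≃ Fin n := Fintype.equivFinOfCardEq (by simpa using hd)
  refine ⟨fun l => (e.symm l).1, fun f => ?_⟩
  rw [e.symm.prod_comp (fun p => f p.1), Fintype.prod_sigma]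
  simp

def sortedPair {α : Type*} [LinearOrder α] (a b : α) : {p : α × α // p.1 ≤ p.2} :=
  ⟨(min a b, max a b), min_le_max⟩

theorem sortedPair_eq_sortedPair_iff {α : Type*} [LinearOrder α] {a b c d : α} :
    sortedPair a b = sortedPair c d ↔ (a = c ∧ b = d) ∨ (a = d ∧ b = c) := by
  simp only [sortedPair, Subtype.mk.injEq, Prod.mk.injEq]
  grind

theorem injective_sortedPair_of_monotone {α : Type*} [LinearOrder α] {j : α → α}
    (hj : Monotone j) : Function.Injective fun l => sortedPair l (j l) := by
  intro a b hab
  rcases sortedPair_eq_sortedPair_iff.mp hab with ⟨h, -⟩ | ⟨ha, hb⟩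
  · exact h
  · rcases le_total a b with h | h
    · have := hj h
      rw [hb, ← ha] at this
      exact h.antisymm this
    · have := hj h
      rw [hb, ← ha] at this
      exact this.antisymm h

theorem Phi_apply_sortedPair (k : Type*) [Field k] {m : ℕ} (r l i : Fin m) :
    Phi k m r (sortedPair l i) = if r = l then X i else if r = i then X l else 0 := by
  unfold Phi sortedPair
  grind

theorem Phi_mem_span_range_X (k : Type*) [Field k] {m : ℕ} (r : Fin m)
    (c : {p : Fin m × Fin m // p.1 ≤ p.2}) :
    Phi k m r c ∈ Ideal.span (Set.range X) := by
  have hX : ∀ i, (X i : MvPolynomial (Fin m) k) ∈ Ideal.span (Set.range X) :=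
    fun i => Ideal.subset_span ⟨i, rfl⟩
  unfold Phi
  split_ifs <;> simp [hX, Ideal.add_mem]

theorem det_Phi_submatrix_sortedPair (k : Type*) [Field k] {m : ℕ} {j : Fin m → Fin m}
    (hj : Monotone j) :
    ((Phi k m).submatrix id fun l => sortedPair l (j l)).det = ∏ l, X (j l) := by
  have hmat : ((Phi k m).submatrix id fun l => sortedPair l (j l)) =
      Matrix.of fun r l => if r = l then X (j l) else if r = j l then X l else 0 :=
    Matrix.ext fun r l => Phi_apply_sortedPair k r l (j l)
  rw [hmat, Matrix.det_of_monotone_offDiag hj]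

theorem exists_det_Phi_submatrix_eq_prod (k : Type*) [Field k] {m : ℕ} (g : Fin m → Fin m) :
    ∃ s : Fin m → {p : Fin m × Fin m // p.1 ≤ p.2}, Function.Injective s ∧
      ((Phi k m).submatrix id s).det = ∏ l, X (g l) := by
  have hj : Monotone (g ∘ Tuple.sort g) := Tuple.monotone_sort g
  refine ⟨_, injective_sortedPair_of_monotone hj, ?_⟩
  rw [det_Phi_submatrix_sortedPair k hj]
  exact Equiv.prod_comp (Tuple.sort g) fun i => X (g i)

/-- every monomial of degree `m` in `x₁,…,x_m` occurs up to sign as a maximal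
(`m × m`) minor of `Φ(x)`; consequently the ideal of maximal minors of `Φ(x)` equals the
`m`-th power of the irrelevant maximal ideal `(x₁,…,x_m)`. -/
theorem minors_of_Phi (k : Type*) [Field k] (m : ℕ) :
    (∀ d : Fin m → ℕ, (∑ i, d i) = m →
      ∃ s : Fin m → {p : Fin m × Fin m // p.1 ≤ p.2}, Function.Injective s ∧
        (((Phi k m).submatrix id s).det = ∏ i, (X i : MvPolynomial (Fin m) k) ^ d i ∨
         ((Phi k m).submatrix id s).det = -∏ i, (X i : MvPolynomial (Fin m) k) ^ d i)) ∧
    Ideal.span {p : MvPolynomial (Fin m) k |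
        ∃ s : Fin m → {p : Fin m × Fin m // p.1 ≤ p.2}, Function.Injective s ∧
          p = ((Phi k m).submatrix id s).det} =
      (Ideal.span (Set.range (X : Fin m → MvPolynomial (Fin m) k))) ^ m := by
  refine ⟨fun d hd => ?_, le_antisymm ?_ ?_⟩
  · obtain ⟨g, hg⟩ := Fintype.exists_prod_comp_eq_prod_pow (M := MvPolynomial (Fin m) k) hd
    obtain ⟨s, hs, hdet⟩ := exists_det_Phi_submatrix_eq_prod k g
    exact ⟨s, hs, Or.inl (hdet.trans (hg X))⟩
  · rw [Ideal.span_le]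
    rintro _ ⟨s, -, rfl⟩
    simpa only [SetLike.mem_coe, Fintype.card_fin] using
      Matrix.det_mem_pow_card (A := (Phi k m).submatrix id s) fun r c =>
        Phi_mem_span_range_X k r (s c)
  · rw [Submodule.span_pow, Ideal.span_le]
    intro p hp
    obtain ⟨f, rfl⟩ := Set.mem_pow.mp hp
    choose g hg using fun l => (f l).2
    obtain ⟨s, hs, hdet⟩ := exists_det_Phi_submatrix_eq_prod k g
    refine Ideal.subset_span ⟨s, hs, ?_⟩
    rw [hdet, List.prod_ofFn]
    simp only [hg]
end
end

section
/- Let $k$ be a field and $r,m\ge 1$. Consider the $r\times rm$ matrix over $k[x_1,\dots,x_m]$ given in block form by $(x_1\cdot 1_r \;|\; x_2\cdot 1_r \;|\; \cdots \;|\; x_m\cdot 1_r)$. Then the ideal generated by its $r\times r$ minors equals $(x_1,\dots,x_m)^r$. -/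
/-!
Column `(a, j)` of the block matrix is `x_a e_j`, so pulling the variable out of each column
writes every maximal minor as a degree-`r` monomial times the determinant of a `0/1` matrix;
hence the minors lie in `(x₁,…,x_m)^r`. Conversely the columns `(a_i, i)` form the diagonal
matrix `diag(x_{a_1},…,x_{a_r})`, whose determinant is an arbitrary degree-`r` monomial, and
these monomials generate `(x₁,…,x_m)^r`.
-/

open MvPolynomial

noncomputable section

/-- The `r × rm` block matrix `(x₁·1_r | x₂·1_r | ⋯ | x_m·1_r)` over `k[x₁,…,x_m]`,
with columns indexed by `Fin m × Fin r`. -/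
def blockMat (k : Type*) [Field k] (r m : ℕ) :
    Matrix (Fin r) (Fin m × Fin r) (MvPolynomial (Fin m) k) :=
  fun i c => if i = c.2 then X c.1 else 0

theorem Ideal.span_range_pow {R ι : Type*} [CommSemiring R] (f : ι → R) (n : ℕ) :
    Ideal.span (Set.range f) ^ n = Ideal.span (Set.range fun j : Fin n → ι => ∏ i, f (j i)) := by
  rw [Ideal.span, Submodule.span_pow]
  congr 1
  ext a
  simp only [Set.mem_pow_iff_prod, Set.mem_range]
  constructor
  · rintro ⟨g, hg, rfl⟩
    choose j hj using hg
    exact ⟨j, by simp only [hj]⟩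
  · rintro ⟨j, rfl⟩
    exact ⟨_, fun i => ⟨j i, rfl⟩, rfl⟩

section

variable {k : Type*} [Field k] {r m : ℕ}

theorem det_blockMat_submatrix (s : Fin r → Fin m × Fin r) :
    ((blockMat k r m).submatrix id s).det =
      (∏ i, X (s i).1) * ((1 : Matrix (Fin r) (Fin r) (MvPolynomial (Fin m) k)).submatrix id
        (Prod.snd ∘ s)).det := by
  rw [← Matrix.det_mul_row]
  congr 1
  ext i i'
  simp [blockMat, Matrix.one_apply, mul_ite]

theorem blockMat_submatrix_diagonal (j : Fin r → Fin m) :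
    (blockMat k r m).submatrix id (fun i => (j i, i)) = Matrix.diagonal (X ∘ j) := by
  ext i i'
  by_cases h : i = i' <;> simp [blockMat, Matrix.diagonal, h]

end

theorem minors_of_block_matrix_general (k : Type*) [Field k] (r m : ℕ) :
    Ideal.span {p : MvPolynomial (Fin m) k |
        ∃ s : Fin r → Fin m × Fin r, Function.Injective s ∧
          p = ((blockMat k r m).submatrix id s).det} =
      (Ideal.span (Set.range (X : Fin m → MvPolynomial (Fin m) k))) ^ r := by
  rw [Ideal.span_range_pow]
  apply le_antisymm <;> rw [Ideal.span_le]
  · rintro _ ⟨s, -, rfl⟩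
    rw [det_blockMat_submatrix]
    exact Ideal.mul_mem_right _ _ (Ideal.subset_span ⟨_, rfl⟩)
  · rintro _ ⟨j, rfl⟩
    refine Ideal.subset_span ⟨fun i => (j i, i), fun a b hab => congrArg Prod.snd hab, ?_⟩
    rw [blockMat_submatrix_diagonal, Matrix.det_diagonal, Function.comp_def]

/-- the ideal generated by the `r × r` minors of
`(x₁·1_r | ⋯ | x_m·1_r)` equals `(x₁,…,x_m)^r`. -/
theorem minors_of_block_matrix (k : Type*) [Field k] (r m : ℕ) (hr : 1 ≤ r) (hm : 1 ≤ m) :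
    Ideal.span {p : MvPolynomial (Fin m) k |
        ∃ s : Fin r → Fin m × Fin r, Function.Injective s ∧
          p = ((blockMat k r m).submatrix id s).det} =
      (Ideal.span (Set.range (X : Fin m → MvPolynomial (Fin m) k))) ^ r :=
  minors_of_block_matrix_general k r m
end
end

section
/- Let $f:A\to C$ be a ring homomorphism with kernel $I$, $B=A/I$ with induced maps $g:A\to B$, $h:B\to C$ (assume $h$ injective). Let $\widetilde C$ be a flat $A[\epsilon]/(\epsilon^2)$-deformation of $C$ with homomorphism $\widetilde f: A[\epsilon]/(\epsilon^2)\to\widetilde C$ lifting $f$, presented as $\widetilde C=A[\epsilon][C]/(J',\epsilon^2)$ where $J'$ is generated by $\{j+\phi(j)\epsilon : j\in J\}\cup\{j\epsilon: j\in J\}$ for some $\phi\in\operatorname{Hom}_C(J/J^2,C)$, $J=\ker(A[C]\to C)$. Then an element $x\in I$ admits a lift $x+x_1\epsilon\in\ker(\widetilde f)$ for some $x_1\in A$ if and only if $\phi(x)\in B\subset C$. -/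
open MvPolynomial

noncomputable section

variable (A C : Type*) [CommRing A] [CommRing C]

/-- the evaluation map `A[C] → C` from the polynomial ring on the set `C`. -/
def evMap (f : A →+* C) : MvPolynomial C A →+* C :=
  MvPolynomial.eval₂Hom f id

/-- `J = ker(A[C] → C)`. -/
def Jker (f : A →+* C) : Ideal (MvPolynomial C A) := RingHom.ker (evMap A C f)

/-!
Write `q ∈ A[ε][C]` as `q₀ + q₁ ε` with `q₀, q₁ ∈ A[C]`. Every generator of `J'` satisfies
`q₀ ∈ J` and `φ(q₀) = ev(q₁)`, and these two conditions cut out an ideal because `φ` is additive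
and `ev`-linear; so for `q = x + x₁ ε ∈ J'` we get `φ(x) = f(x₁)`. Conversely, if `φ(x) = f(x₁)`
then `x + x₁ ε = (x + φ(x) ε) + (x₁ - X_{φ(x)}) ε` with `x₁ - X_{φ(x)} ∈ J`.
-/

open DualNumber

namespace DualNumber

variable {R S : Type*} [CommRing R] [CommRing S]

def mapRingHom (f : R →+* S) : R[ε] →+* S[ε] where
  toFun x := TrivSqZeroExt.inl (f x.fst) + TrivSqZeroExt.inr (f x.snd)
  map_one' := by ext <;> simp
  map_mul' x y := by ext <;> simp [smul_eq_mul, MulOpposite.smul_eq_mul_unop]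
  map_zero' := by ext <;> simp
  map_add' x y := by ext <;> simp

@[simp]
lemma fst_mapRingHom (f : R →+* S) (x : R[ε]) : (mapRingHom f x).fst = f x.fst := by
  simp [mapRingHom]

@[simp]
lemma snd_mapRingHom (f : R →+* S) (x : R[ε]) : (mapRingHom f x).snd = f x.snd := by
  simp [mapRingHom]

end DualNumber

section

variable {σ R S : Type*} [CommRing R] [CommRing S]

def reduceEps : MvPolynomial σ R[ε] →+* MvPolynomial σ R :=
  map (TrivSqZeroExt.fstHom R R R).toRingHom

def evalDual (f : R →+* S) (v : σ → S) : MvPolynomial σ R[ε] →+* S[ε] :=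
  eval₂Hom (DualNumber.mapRingHom f) (TrivSqZeroExt.inl ∘ v)

@[simp]
lemma reduceEps_C (a : R[ε]) : reduceEps (MvPolynomial.C a : MvPolynomial σ R[ε]) = .C a.fst := by
  simp [reduceEps]

@[simp]
lemma reduceEps_X (i : σ) : reduceEps (X i : MvPolynomial σ R[ε]) = X i := by
  simp [reduceEps]

@[simp]
lemma evalDual_C (f : R →+* S) (v : σ → S) (a : R[ε]) :
    evalDual f v (.C a) = DualNumber.mapRingHom f a := by
  simp [evalDual]

@[simp]
lemma evalDual_X (f : R →+* S) (v : σ → S) (i : σ) :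
    evalDual f v (X i) = TrivSqZeroExt.inl (v i) := by
  simp [evalDual]

@[simp]
lemma reduceEps_map_algebraMap (p : MvPolynomial σ R) :
    reduceEps (map (algebraMap R R[ε]) p) = p := by
  rw [reduceEps, map_map]
  convert map_id p
  ext
  rfl

@[simp]
lemma evalDual_map_algebraMap (f : R →+* S) (v : σ → S) (p : MvPolynomial σ R) :
    evalDual f v (map (algebraMap R R[ε]) p) = TrivSqZeroExt.inl (eval₂ f v p) := by
  show ((evalDual f v).comp (map (algebraMap R R[ε]))) p =
    ((TrivSqZeroExt.inlHom S S).comp (eval₂Hom f v)) p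
  congr 1
  ext <;> simp [TrivSqZeroExt.algebraMap_eq_inl]

lemma fst_evalDual (f : R →+* S) (v : σ → S) (q : MvPolynomial σ R[ε]) :
    (evalDual f v q).fst = eval₂ f v (reduceEps q) := by
  show ((TrivSqZeroExt.fstHom S S S).toRingHom.comp (evalDual f v)) q =
    ((eval₂Hom f v).comp reduceEps) q
  congr 1
  ext <;> simp

end

section

variable {A C} (f : A →+* C) (φ : Jker A C f → C)

def deformationGenerators : Set (MvPolynomial C A[ε]) :=
  {q | ∃ j : Jker A C f, q = map (algebraMap A A[ε]) (j : MvPolynomial C A) + X (φ j) * .C ε} ∪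
    {q | ∃ j : Jker A C f, q = map (algebraMap A A[ε]) (j : MvPolynomial C A) * .C ε}

variable {f φ} (hadd : ∀ j j' : Jker A C f, φ (j + j') = φ j + φ j')
    (hlin : ∀ (p : MvPolynomial C A) (j : Jker A C f)
      (hpj : p * (j : MvPolynomial C A) ∈ Jker A C f),
      φ ⟨p * (j : MvPolynomial C A), hpj⟩ = evMap A C f p * φ j)

/-- For `q = q₀ + q₁ ε` we have `reduceEps q = q₀` and `(evalDual f id q).snd = ev(q₁)`, so this
is the ideal of those `q` with `q₀ ∈ J` and `φ(q₀) = ev(q₁)`. -/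
def compatibleIdeal : Ideal (MvPolynomial C A[ε]) where
  carrier := {q | ∃ h : reduceEps q ∈ Jker A C f, φ ⟨reduceEps q, h⟩ = (evalDual f id q).snd}
  zero_mem' := ⟨by simp, (congrArg φ (Subtype.ext (map_zero _))).trans
    ((map_zero (AddMonoidHom.mk' φ hadd)).trans (by simp))⟩
  add_mem' := by
    rintro a b ⟨ha, hφa⟩ ⟨hb, hφb⟩
    refine ⟨by simpa using add_mem ha hb, ?_⟩
    simp only [map_add, TrivSqZeroExt.snd_add, ← hφa, ← hφb, ← hadd]
    rfl
  smul_mem' := by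
    rintro p q ⟨hq, hφq⟩
    have hpq : reduceEps p * reduceEps q ∈ Jker A C f := Ideal.mul_mem_left _ _ hq
    refine ⟨by simpa using hpq, ?_⟩
    have hq0 : (evalDual f id q).fst = 0 := by rw [fst_evalDual]; exact hq
    simp only [smul_eq_mul, map_mul, TrivSqZeroExt.snd_mul, hq0, MulOpposite.op_zero, zero_smul,
      add_zero, hlin (reduceEps p) ⟨reduceEps q, hq⟩ hpq, hφq, fst_evalDual]
    rfl

lemma mem_compatibleIdeal_iff_of_reduceEps_eq {q : MvPolynomial C A[ε]} {j : Jker A C f}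
    (hq : reduceEps q = j) : q ∈ compatibleIdeal hadd hlin ↔ φ j = (evalDual f id q).snd := by
  obtain ⟨p, hp⟩ := j
  subst hq
  exact ⟨fun ⟨_, h⟩ => h, fun h => ⟨hp, h⟩⟩

lemma span_deformationGenerators_le_compatibleIdeal :
    Ideal.span (deformationGenerators f φ) ≤ compatibleIdeal hadd hlin := by
  have hj0 (j : Jker A C f) : eval₂ f id (j : MvPolynomial C A) = 0 := j.2
  have hφ0 : φ 0 = 0 := map_zero (AddMonoidHom.mk' φ hadd)
  rw [Ideal.span_le]
  rintro q (⟨j, rfl⟩ | ⟨j, rfl⟩)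
  · rw [SetLike.mem_coe, mem_compatibleIdeal_iff_of_reduceEps_eq hadd hlin (j := j) (by simp)]
    simp [hj0]
  · rw [SetLike.mem_coe, mem_compatibleIdeal_iff_of_reduceEps_eq hadd hlin (j := 0) (by simp)]
    simp [hj0, hφ0]

lemma C_add_eps_mem_span_deformationGenerators {x x₁ : A}
    (hx : (MvPolynomial.C x : MvPolynomial C A) ∈ Jker A C f) (hφx : φ ⟨.C x, hx⟩ = f x₁) :
    (.C (algebraMap A A[ε] x + algebraMap A A[ε] x₁ * ε) : MvPolynomial C A[ε]) ∈
      Ideal.span (deformationGenerators f φ) := by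
  set jx : Jker A C f := ⟨.C x, hx⟩
  have hj : (.C x₁ - X (φ jx) : MvPolynomial C A) ∈ Jker A C f := by
    simp [Jker, RingHom.mem_ker, evMap, hφx]
  have hsplit : (.C (algebraMap A A[ε] x + algebraMap A A[ε] x₁ * ε) : MvPolynomial C A[ε]) =
      (map (algebraMap A A[ε]) (jx : MvPolynomial C A) + X (φ jx) * .C ε) +
        map (algebraMap A A[ε]) (.C x₁ - X (φ jx)) * .C ε := by
    simp only [jx, map_sub, map_add, map_mul, map_C, map_X]
    ring
  rw [hsplit]
  exact Ideal.add_mem _ (Ideal.subset_span (Or.inl ⟨jx, rfl⟩))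
    (Ideal.subset_span (Or.inr ⟨⟨_, hj⟩, rfl⟩))

end

/-- let `f : A → C` with kernel `I`, `B = A/I ⊆ C`.  Let `φ ∈ Hom_C(J/J², C)`
(encoded as an additive map `φ : J → C` with `φ(p·j) = ev(p)·φ(j)`), and let the
deformation `C̃ = A[ε][C]/(J', ε²)` be presented with
`J' = ({j + φ(j)ε} ∪ {jε} : j ∈ J)`.  Then `x ∈ I` admits a lift `x + x₁ε ∈ ker(f̃)`
(i.e. `x + x₁ε ∈ J'` for some `x₁ ∈ A`) if and only if `φ(x) ∈ B`, i.e. `φ(x)` lies in the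
image of `A → C`. -/
theorem deformation_lift_iff (f : A →+* C) (φ : Jker A C f → C)
    (hadd : ∀ j j' : Jker A C f, φ (j + j') = φ j + φ j')
    (hlin : ∀ (p : MvPolynomial C A) (j : Jker A C f)
      (hpj : p * (j : MvPolynomial C A) ∈ Jker A C f),
      φ ⟨p * (j : MvPolynomial C A), hpj⟩ = evMap A C f p * φ j) :
    ∀ (x : A) (hx : (MvPolynomial.C x : MvPolynomial C A) ∈ Jker A C f),
      (∃ x₁ : A,
        (MvPolynomial.C (algebraMap A (DualNumber A) x +
            algebraMap A (DualNumber A) x₁ * DualNumber.eps) :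
            MvPolynomial C (DualNumber A)) ∈
          Ideal.span
            ({q | ∃ j : Jker A C f,
                q = MvPolynomial.map (algebraMap A (DualNumber A)) (j : MvPolynomial C A) +
                  MvPolynomial.X (φ j) * MvPolynomial.C DualNumber.eps} ∪
             {q | ∃ j : Jker A C f,
                q = MvPolynomial.map (algebraMap A (DualNumber A)) (j : MvPolynomial C A) *
                  MvPolynomial.C DualNumber.eps})) ↔
      φ ⟨MvPolynomial.C x, hx⟩ ∈ Set.range f := by
  intro x hx
  constructor
  · rintro ⟨x₁, hmem⟩
    have hcompat := span_deformationGenerators_le_compatibleIdeal hadd hlin hmem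
    rw [mem_compatibleIdeal_iff_of_reduceEps_eq hadd hlin (j := ⟨.C x, hx⟩)
      (by simp [TrivSqZeroExt.algebraMap_eq_inl])] at hcompat
    exact ⟨x₁, by simpa [TrivSqZeroExt.algebraMap_eq_inl] using hcompat.symm⟩
  · rintro ⟨x₁, hx₁⟩
    exact ⟨x₁, C_add_eps_mem_span_deformationGenerators hx hx₁.symm⟩
end
end
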